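/- In the setup (G centerless, f, h : G → Aut(G) with h(σ) = conj(g(σ))∘f(σ), g a bijection satisfying g(στ) = g(σ)·f(σ)(g(τ)), and N = {ρ(g(σ))∘f(σ) : σ ∈ G} a normal subgroup of Hol(G)), the set {f(σ)h(σ) : σ ∈ G} is a normal subgroup of Aut(G), and the map σ ↦ f(σ)h(σ) is an isomorphism from G onto this subgroup. -/

import Mathlib

/-!
Every element `ρ(b) ∘ β` (`β ∈ Aut G`) of `Hol G` determines `b` and `β`, so when it lies in `N`
there is a `σ` with `g σ = b` and `f σ = β`. Conjugating `n_σ = ρ(g σ) ∘ f σ` by `α ∈ Aut G`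
gives a `σ'` with `f σ' h σ' = α (f σ h σ) α⁻¹`, so the image of `σ ↦ f σ h σ` is normal.
As `λ(a), ρ(a) ∈ Hol G`, `N` contains the commutators `[n_τ, λ(a)] = λ(f τ a · a⁻¹)` and
`[n_τ, ρ(a)] = ρ(h τ a · a⁻¹)`, which are `n_κ` with `κ ∈ ker h` and `n_μ` with `μ ∈ ker f`.
Since `g (κ σ) = g σ · g κ` for `κ ∈ ker h`, conjugation by `f τ` moves `σ` inside its coset
`(ker h) σ`, so `f τ` commutes with `h σ` and `σ ↦ f σ h σ` is a homomorphism. If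
`f σ h σ = 1`, then `h σ = (f σ)⁻¹` makes the two kinds of elements coincide; they lie in
`ker f ∩ ker h`, where `g` takes central, hence trivial, values, so `f σ = 1`, then `g σ = 1`
and `σ = 1`.
-/

/-- The left regular representation `λ : G →* Perm G`, `λ(σ)(x) = σ·x`. -/
def lambda (G : Type*) [Group G] : G →* Equiv.Perm G where
  toFun σ := Equiv.mulLeft σ
  map_one' := by ext x; simp
  map_mul' σ τ := by ext x; simp [mul_assoc]

/-- The right regular representation `ρ : G →* Perm G`, `ρ(σ)(x) = x·σ⁻¹`. -/
def rho (G : Type*) [Group G] : G →* Equiv.Perm G where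
  toFun σ := Equiv.mulRight σ⁻¹
  map_one' := by ext x; simp
  map_mul' σ τ := by ext x; simp [mul_assoc]

/-- The holomorph `Hol(G)`: the normalizer of `λ(G)` in `Perm G`. -/
def Hol (G : Type*) [Group G] : Subgroup (Equiv.Perm G) :=
  Subgroup.normalizer (((lambda G).range : Subgroup (Equiv.Perm G)) : Set (Equiv.Perm G))

section Holomorph

variable {G : Type*} [Group G]

@[simp]
theorem lambda_apply (a x : G) : lambda G a x = a * x := rfl

@[simp]
theorem rho_apply (a x : G) : rho G a x = x * a⁻¹ := rfl

@[simp]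
theorem rho_symm_apply (a x : G) : (rho G a).symm x = x * a := by
  simp [Equiv.symm_apply_eq]

@[simp]
theorem MulAut.toPerm_apply (α : MulAut G) (x : G) : MulAut.toPerm G α x = α x := rfl

@[simp]
theorem MulAut.toPerm_symm_apply (α : MulAut G) (x : G) :
    (MulAut.toPerm G α).symm x = α.symm x := rfl

theorem lambda_eq_rho_mul_toPerm_conj (c : G) :
    lambda G c = rho G c⁻¹ * MulAut.toPerm G (MulAut.conj c) := by
  ext x; simp

theorem rho_mul_toPerm_inj {b b' : G} {β β' : MulAut G} :
    rho G b * MulAut.toPerm G β = rho G b' * MulAut.toPerm G β' ↔ b = b' ∧ β = β' := by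
  refine ⟨fun he => ?_, fun ⟨hb, hβ⟩ => hb ▸ hβ ▸ rfl⟩
  have hb : b = b' := by simpa using congr(($he 1)⁻¹)
  subst hb
  exact ⟨rfl, MulEquiv.ext fun x => by simpa using congr($he x)⟩

theorem toPerm_conj_lambda (α : MulAut G) (a : G) :
    MulAut.toPerm G α * lambda G a * (MulAut.toPerm G α)⁻¹ = lambda G (α a) := by
  ext x; simp

theorem rho_conj_lambda (b a : G) : rho G b * lambda G a * (rho G b)⁻¹ = lambda G a := by
  ext x; simp [mul_assoc]

theorem mem_Hol_of_conj_lambda {x : Equiv.Perm G} {φ : G → G} (hφ : Function.Surjective φ)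
    (hx : ∀ a, x * lambda G a * x⁻¹ = lambda G (φ a)) : x ∈ Hol G := by
  refine Subgroup.mem_normalizer_iff.mpr fun p => ⟨?_, ?_⟩
  · rintro ⟨a, rfl⟩
    exact ⟨φ a, (hx a).symm⟩
  · rintro ⟨c, hc⟩
    obtain ⟨a, rfl⟩ := hφ c
    exact ⟨a, (mul_left_cancel (mul_right_cancel (hc.symm.trans (hx a).symm))).symm⟩

theorem lambda_mem_Hol (a : G) : lambda G a ∈ Hol G :=
  Subgroup.le_normalizer ⟨a, rfl⟩

theorem rho_mem_Hol (b : G) : rho G b ∈ Hol G :=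
  mem_Hol_of_conj_lambda Function.surjective_id (rho_conj_lambda b)

theorem toPerm_mem_Hol (α : MulAut G) : MulAut.toPerm G α ∈ Hol G :=
  mem_Hol_of_conj_lambda α.surjective (toPerm_conj_lambda α)

theorem rho_mul_toPerm_conj_lambda (b a : G) (β : MulAut G) :
    rho G b * MulAut.toPerm G β * lambda G a * (rho G b * MulAut.toPerm G β)⁻¹
      = lambda G (β a) := by
  ext x; simp [mul_assoc]

theorem rho_mul_toPerm_conj_rho (b a : G) (β : MulAut G) :
    rho G b * MulAut.toPerm G β * rho G a * (rho G b * MulAut.toPerm G β)⁻¹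
      = rho G ((MulAut.conj b * β) a) := by
  ext x; simp [mul_assoc]

theorem toPerm_conj_rho_mul_toPerm (α : MulAut G) (b : G) (β : MulAut G) :
    MulAut.toPerm G α * (rho G b * MulAut.toPerm G β) * (MulAut.toPerm G α)⁻¹
      = rho G (α b) * MulAut.toPerm G (α * β * α⁻¹) := by
  ext x; simp

end Holomorph

theorem MulAut.conj_apply_mulAut {G : Type*} [Group G] (α : MulAut G) (x : G) :
    MulAut.conj (α x) = α * MulAut.conj x * α⁻¹ := by
  ext y; simp

theorem eq_one_of_conj_eq_one {G : Type*} [Group G] (hZ : Subgroup.center G = ⊥) {b : G}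
    (hb : MulAut.conj b = 1) : b = 1 := by
  have hbc : b ∈ Subgroup.center G := Subgroup.mem_center_iff.mpr fun c =>
    (mul_inv_eq_iff_eq_mul.mp congr($hb c)).symm
  simpa [hZ] using hbc

theorem Subgroup.mul_mul_inv_mul_inv_mem {M : Type*} [Group M] {H N : Subgroup M}
    (hN : ∀ x ∈ H, ∀ n ∈ N, x * n * x⁻¹ ∈ N) {n x : M} (hn : n ∈ N) (hx : x ∈ H) :
    n * x * n⁻¹ * x⁻¹ ∈ N := by
  simpa only [mul_assoc] using N.mul_mem hn (hN x hx _ (N.inv_mem hn))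

section RegularNormalSubgroup

variable {G : Type*} [Group G] {f h : G →* MulAut G} {g : Equiv.Perm G}
  {N : Subgroup (Equiv.Perm G)}

theorem rho_mul_toPerm_mem
    (hN : (N : Set (Equiv.Perm G))
      = {q | ∃ σ : G, q = rho G (g σ) * MulAut.toPerm G (f σ)}) (σ : G) :
    rho G (g σ) * MulAut.toPerm G (f σ) ∈ N := by
  rw [← SetLike.mem_coe, hN]
  exact ⟨σ, rfl⟩

theorem exists_of_rho_mul_toPerm_mem
    (hN : (N : Set (Equiv.Perm G))
      = {q | ∃ σ : G, q = rho G (g σ) * MulAut.toPerm G (f σ)})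
    {b : G} {β : MulAut G} (hq : rho G b * MulAut.toPerm G β ∈ N) :
    ∃ σ, g σ = b ∧ f σ = β := by
  rw [← SetLike.mem_coe, hN] at hq
  obtain ⟨σ, hσ⟩ := hq
  obtain ⟨hb, hβ⟩ := rho_mul_toPerm_inj.mp hσ
  exact ⟨σ, hb.symm, hβ.symm⟩

theorem exists_conj_mulAut
    (hN : (N : Set (Equiv.Perm G))
      = {q | ∃ σ : G, q = rho G (g σ) * MulAut.toPerm G (f σ)})
    (hNnorm : ∀ x ∈ Hol G, ∀ n ∈ N, x * n * x⁻¹ ∈ N) (α : MulAut G) (σ : G) :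
    ∃ σ', g σ' = α (g σ) ∧ f σ' = α * f σ * α⁻¹ := by
  apply exists_of_rho_mul_toPerm_mem hN
  rw [← toPerm_conj_rho_mul_toPerm]
  exact hNnorm _ (toPerm_mem_Hol α) _ (rho_mul_toPerm_mem hN σ)

theorem exists_g_eq_and_h_eq_one
    (hN : (N : Set (Equiv.Perm G))
      = {q | ∃ σ : G, q = rho G (g σ) * MulAut.toPerm G (f σ)})
    (hNnorm : ∀ x ∈ Hol G, ∀ n ∈ N, x * n * x⁻¹ ∈ N)
    (hh : ∀ σ : G, h σ = MulAut.conj (g σ) * f σ) (τ a : G) :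
    ∃ κ, g κ = a * (f τ a)⁻¹ ∧ h κ = 1 := by
  have hmem := Subgroup.mul_mul_inv_mul_inv_mem hNnorm (rho_mul_toPerm_mem hN τ)
    (lambda_mem_Hol a)
  rw [rho_mul_toPerm_conj_lambda, ← map_inv, ← map_mul, lambda_eq_rho_mul_toPerm_conj] at hmem
  obtain ⟨κ, hgκ, hfκ⟩ := exists_of_rho_mul_toPerm_mem hN hmem
  refine ⟨κ, by rw [hgκ, mul_inv_rev, inv_inv], ?_⟩
  rw [hh, hgκ, hfκ, ← map_mul, inv_mul_cancel, map_one]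

theorem exists_g_eq_and_f_eq_one
    (hN : (N : Set (Equiv.Perm G))
      = {q | ∃ σ : G, q = rho G (g σ) * MulAut.toPerm G (f σ)})
    (hNnorm : ∀ x ∈ Hol G, ∀ n ∈ N, x * n * x⁻¹ ∈ N)
    (hh : ∀ σ : G, h σ = MulAut.conj (g σ) * f σ) (τ a : G) :
    ∃ μ, g μ = h τ a * a⁻¹ ∧ f μ = 1 := by
  have hmem := Subgroup.mul_mul_inv_mul_inv_mem hNnorm (rho_mul_toPerm_mem hN τ)
    (rho_mem_Hol a)
  rw [rho_mul_toPerm_conj_rho, ← hh, ← map_inv, ← map_mul, ← mul_one (rho G _),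
    ← map_one (MulAut.toPerm G)] at hmem
  exact exists_of_rho_mul_toPerm_mem hN hmem

theorem g_mul_of_h_eq_one (hrel : ∀ σ τ : G, g (σ * τ) = g σ * (f σ) (g τ))
    (hh : ∀ σ : G, h σ = MulAut.conj (g σ) * f σ) {κ : G} (hκ : h κ = 1) (σ : G) :
    g (κ * σ) = g σ * g κ := by
  have hfκ : f κ = (MulAut.conj (g κ))⁻¹ := eq_inv_of_mul_eq_one_right ((hh κ).symm.trans hκ)
  rw [hrel, hfκ, MulAut.conj_inv_apply]
  group

theorem h_eq_conj_of_g_eq_of_f_eq (hh : ∀ σ : G, h σ = MulAut.conj (g σ) * f σ)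
    {α : MulAut G} {σ σ' : G} (hg : g σ' = α (g σ)) (hf : f σ' = α * f σ * α⁻¹) :
    h σ' = α * h σ * α⁻¹ := by
  rw [hh, hg, hf, hh, MulAut.conj_apply_mulAut]
  group

theorem g_eq_one_of_f_eq_one_of_h_eq_one (hZ : Subgroup.center G = ⊥)
    (hh : ∀ σ : G, h σ = MulAut.conj (g σ) * f σ) {σ : G} (hf : f σ = 1) (hh1 : h σ = 1) :
    g σ = 1 :=
  eq_one_of_conj_eq_one hZ (by simpa [hf, hh1] using (hh σ).symm)

theorem commute_f_h
    (hN : (N : Set (Equiv.Perm G))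
      = {q | ∃ σ : G, q = rho G (g σ) * MulAut.toPerm G (f σ)})
    (hNnorm : ∀ x ∈ Hol G, ∀ n ∈ N, x * n * x⁻¹ ∈ N)
    (hrel : ∀ σ τ : G, g (σ * τ) = g σ * (f σ) (g τ))
    (hh : ∀ σ : G, h σ = MulAut.conj (g σ) * f σ) (τ σ : G) :
    Commute (f τ) (h σ) := by
  obtain ⟨κ, hgκ, hκ⟩ := exists_g_eq_and_h_eq_one hN hNnorm hh τ (g σ)⁻¹
  obtain ⟨σ', hgσ', hfσ'⟩ := exists_conj_mulAut hN hNnorm (f τ) σ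
  have hσ' : σ' = κ * σ := g.injective <| by
    rw [g_mul_of_h_eq_one hrel hh hκ, hgκ, hgσ', map_inv, inv_inv, mul_inv_cancel_left]
  have hconj : f τ * h σ * (f τ)⁻¹ = h σ := by
    rw [← h_eq_conj_of_g_eq_of_f_eq hh hgσ' hfσ', hσ', map_mul, hκ, one_mul]
  exact mul_inv_eq_iff_eq_mul.mp hconj

theorem eq_one_of_f_mul_h_eq_one (hZ : Subgroup.center G = ⊥) (hg1 : g 1 = 1)
    (hN : (N : Set (Equiv.Perm G))
      = {q | ∃ σ : G, q = rho G (g σ) * MulAut.toPerm G (f σ)})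
    (hNnorm : ∀ x ∈ Hol G, ∀ n ∈ N, x * n * x⁻¹ ∈ N)
    (hh : ∀ σ : G, h σ = MulAut.conj (g σ) * f σ) {σ : G} (hσ : f σ * h σ = 1) : σ = 1 := by
  have hhσ : h σ = (f σ)⁻¹ := eq_inv_of_mul_eq_one_right hσ
  have hfσ : f σ = 1 := MulEquiv.ext fun a => by
    obtain ⟨κ, hgκ, hκ⟩ := exists_g_eq_and_h_eq_one hN hNnorm hh σ a
    obtain ⟨μ, hgμ, hμ⟩ := exists_g_eq_and_f_eq_one hN hNnorm hh σ (f σ a)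
    have hκμ : κ = μ := g.injective <| by rw [hgκ, hgμ, hhσ, MulAut.inv_apply_self]
    have hgκ1 : g κ = 1 := g_eq_one_of_f_eq_one_of_h_eq_one hZ hh (hκμ ▸ hμ) hκ
    exact (mul_inv_eq_one.mp (hgκ ▸ hgκ1)).symm
  have hgσ : g σ = 1 := g_eq_one_of_f_eq_one_of_h_eq_one hZ hh hfσ (by rw [hhσ, hfσ, inv_one])
  exact g.injective (hgσ.trans hg1.symm)

theorem exists_f_mul_h_eq_conj
    (hN : (N : Set (Equiv.Perm G))
      = {q | ∃ σ : G, q = rho G (g σ) * MulAut.toPerm G (f σ)})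
    (hNnorm : ∀ x ∈ Hol G, ∀ n ∈ N, x * n * x⁻¹ ∈ N)
    (hh : ∀ σ : G, h σ = MulAut.conj (g σ) * f σ) (α : MulAut G) (σ : G) :
    ∃ σ', f σ' * h σ' = α * (f σ * h σ) * α⁻¹ := by
  obtain ⟨σ', hgσ', hfσ'⟩ := exists_conj_mulAut hN hNnorm α σ
  refine ⟨σ', ?_⟩
  rw [hfσ', h_eq_conj_of_g_eq_of_f_eq hh hgσ' hfσ']
  group

end RegularNormalSubgroup

theorem fh_is_normal_subgroup_iso_to_G_general
    (G : Type*) [Group G] (hZ : Subgroup.center G = ⊥)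
    (f h : G →* MulAut G) (g : Equiv.Perm G) (hg1 : g 1 = 1)
    (hrel : ∀ σ τ : G, g (σ * τ) = g σ * (f σ) (g τ))
    (hh : ∀ σ : G, h σ = MulAut.conj (g σ) * f σ)
    (N : Subgroup (Equiv.Perm G))
    (hN : (N : Set (Equiv.Perm G))
      = {q | ∃ σ : G, q = rho G (g σ) * MulAut.toPerm G (f σ)})
    (hNnorm : ∀ x ∈ Hol G, ∀ n ∈ N, x * n * x⁻¹ ∈ N)
    :
    ∃ P : Subgroup (MulAut G),
      (P : Set (MulAut G)) = Set.range (fun σ : G => f σ * h σ) ∧ P.Normal ∧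
      ∃ e : G ≃* ↥P, ∀ σ : G, (e σ : MulAut G) = f σ * h σ := by
  let φ : G →* MulAut G :=
    (f.noncommCoprod h (commute_f_h hN hNnorm hrel hh)).comp
      ((MonoidHom.id G).prod (MonoidHom.id G))
  have hφ : Function.Injective φ := (injective_iff_map_eq_one φ).mpr fun _ =>
    eq_one_of_f_mul_h_eq_one hZ hg1 hN hNnorm hh
  refine ⟨φ.range, φ.coe_range, ⟨?_⟩, MonoidHom.ofInjective hφ, fun _ => rfl⟩
  rintro _ ⟨σ, rfl⟩ α
  exact exists_f_mul_h_eq_conj hN hNnorm hh α σ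

/-- In the setup, the set `{f(σ)h(σ) : σ ∈ G}` is a normal subgroup of
`Aut(G)` and `σ ↦ f(σ)h(σ)` is an isomorphism of `G` onto it. -/
theorem fh_is_normal_subgroup_iso_to_G
    (G : Type*) [Group G] (hZ : Subgroup.center G = ⊥)
    (f h : G →* MulAut G) (g : Equiv.Perm G) (hg1 : g 1 = 1)
    (hrel : ∀ σ τ : G, g (σ * τ) = g σ * (f σ) (g τ))
    (hh : ∀ σ : G, h σ = MulAut.conj (g σ) * f σ)
    (N : Subgroup (Equiv.Perm G))
    (hN : (N : Set (Equiv.Perm G))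
      = {q | ∃ σ : G, q = rho G (g σ) * MulAut.toPerm G (f σ)})
    (hNle : N ≤ Hol G)
    (hNnorm : ∀ x ∈ Hol G, ∀ n ∈ N, x * n * x⁻¹ ∈ N)
    :
    ∃ P : Subgroup (MulAut G),
      (P : Set (MulAut G)) = Set.range (fun σ : G => f σ * h σ) ∧ P.Normal ∧
      ∃ e : G ≃* ↥P, ∀ σ : G, (e σ : MulAut G) = f σ * h σ :=
  fh_is_normal_subgroup_iso_to_G_general G hZ f h g hg1 hrel hh N hN hNnorm
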